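/- Let m ≥ n, let G ∈ ℝ^{m×n} be a nonzero matrix with full column rank (i.e., GᵀG invertible), and let λ > 0. Then the matrix ΔW* = −η · G(GᵀG)^{−1/2}, with step size η = (1/λ)·tr((GᵀG)^{1/2}) (one λ-th of the sum of the singular values of G), is a global minimizer over all ΔW ∈ ℝ^{m×n} of the functional F(ΔW) = ⟨G, ΔW⟩_F + (λ/2)·‖ΔW‖₂². That is, steepest descent under the spectral norm is achieved by the negatively scaled polar factor of the gradient. -/

import Mathlib

/-!
Write `S = (GᵀG)^{1/2}` and `O = G S⁻¹`, so that `OᵀO = 1` (hence `‖O‖₂ ≤ 1`) and `G = O S`.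
Then `⟨G, W⟩_F = tr (S · OᵀW) ≥ -‖OᵀW‖₂ tr S ≥ -‖W‖₂ tr S`, since `|tr (S M)| ≤ ‖M‖₂ tr S`
for `S ⪰ 0`. With `t = tr S`, the objective is therefore at least `-t x + λ/2 x²` at
`x = ‖W‖₂`, which is at least `-t²/(2λ)`, and `ΔW* = -(t/λ) O` attains this value.
-/

open Matrix
open scoped Matrix.Norms.L2Operator

/-- The spectral norm (`ℓ2 → ℓ2` operator norm) of a real matrix, i.e. its largest
singular value.  This is Mathlib's scoped L2 operator norm on matrices. -/
noncomputable def matSpectralNorm {m n : ℕ} (M : Matrix (Fin m) (Fin n) ℝ) : ℝ := ‖M‖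

open Classical in
/-- The unique symmetric positive semidefinite square root of a positive semidefinite
real matrix (junk value `0` if the input is not positive semidefinite). -/
noncomputable def matrixSqrt {n : ℕ} (A : Matrix (Fin n) (Fin n) ℝ) :
    Matrix (Fin n) (Fin n) ℝ :=
  if h : A.PosSemidef then h.1.cfc Real.sqrt else 0

/-- The polar factor `X (XᵀX)^{-1/2}` of a matrix `X` with full column rank. -/
noncomputable def polarFactor {m n : ℕ} (X : Matrix (Fin m) (Fin n) ℝ) :
    Matrix (Fin m) (Fin n) ℝ :=
  X * (matrixSqrt (Xᵀ * X))⁻¹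

/-- The Frobenius inner product `⟨A, B⟩_F = tr(Aᵀ B)`. -/
noncomputable def frobInner {m n : ℕ} (A B : Matrix (Fin m) (Fin n) ℝ) : ℝ :=
  (Aᵀ * B).trace

open scoped MatrixOrder

namespace Matrix

variable {ι : Type*} [Fintype ι] [DecidableEq ι]

theorem abs_dotProduct_mulVec_le (M : Matrix ι ι ℝ) (x : ι → ℝ) :
    |x ⬝ᵥ (M *ᵥ x)| ≤ ‖M‖ * (x ⬝ᵥ x) := by
  set v : EuclideanSpace ℝ ι := WithLp.toLp 2 x
  have hinner : x ⬝ᵥ (M *ᵥ x) = inner ℝ v (WithLp.toLp 2 (M *ᵥ x)) := by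
    simp [v, EuclideanSpace.inner_eq_star_dotProduct, dotProduct_comm]
  have hnorm : x ⬝ᵥ x = ‖v‖ ^ 2 := by
    rw [EuclideanSpace.real_norm_sq_eq]
    simp [v, dotProduct, sq]
  calc |x ⬝ᵥ (M *ᵥ x)| ≤ ‖v‖ * ‖(WithLp.toLp 2 (M *ᵥ x) : EuclideanSpace ℝ ι)‖ :=
        hinner ▸ abs_real_inner_le_norm _ _
    _ ≤ ‖v‖ * (‖M‖ * ‖v‖) := by gcongr; exact M.l2_opNorm_mulVec v
    _ = ‖M‖ * (x ⬝ᵥ x) := by rw [hnorm]; ring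

/-- Writing `S = Bᵀ B`, the trace `tr (S M)` is the sum of the quadratic forms of `M` at the rows
of `B`, while `tr S` is the sum of their squared lengths. -/
theorem abs_trace_mul_le {S : Matrix ι ι ℝ} (hS : S.PosSemidef) (M : Matrix ι ι ℝ) :
    |(S * M).trace| ≤ ‖M‖ * S.trace := by
  obtain ⟨B, rfl⟩ := CStarAlgebra.nonneg_iff_eq_star_mul_self.mp hS.nonneg
  have hrows : ∀ N : Matrix ι ι ℝ, (star B * B * N).trace = ∑ i, B i ⬝ᵥ (N *ᵥ B i) := by
    intro N
    rw [Matrix.mul_assoc, trace_mul_comm, trace]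
    simp [mul_mul_apply, star_eq_conjTranspose, conjTranspose_eq_transpose_of_trivial]
  calc |(star B * B * M).trace| ≤ ∑ i, ‖M‖ * (B i ⬝ᵥ B i) := by
        rw [hrows]
        exact (Finset.abs_sum_le_sum_abs _ _).trans
          (Finset.sum_le_sum fun i _ => abs_dotProduct_mulVec_le M (B i))
    _ = ‖M‖ * (star B * B).trace := by
        rw [← Finset.mul_sum, ← Matrix.mul_one (star B * B), hrows]
        simp

theorem l2_opNorm_one_le {𝕜 : Type*} [RCLike 𝕜] : ‖(1 : Matrix ι ι 𝕜)‖ ≤ 1 := by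
  rw [← diagonal_one, l2_opNorm_diagonal]
  exact pi_norm_le_iff_of_nonneg zero_le_one |>.mpr fun _ => norm_one.le

theorem l2_opNorm_le_one_of_conjTranspose_mul_self_eq_one {𝕜 κ : Type*} [RCLike 𝕜] [Fintype κ]
    {O : Matrix κ ι 𝕜} (hO : Oᴴ * O = 1) : ‖O‖ ≤ 1 := by
  have h := l2_opNorm_conjTranspose_mul_self O
  rw [hO] at h
  nlinarith [l2_opNorm_one_le (ι := ι) (𝕜 := 𝕜), norm_nonneg O]

end Matrix

section PolarFactor

variable {m n : ℕ}

theorem matrixSqrt_eq_sqrt {A : Matrix (Fin n) (Fin n) ℝ} (hA : A.PosSemidef) :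
    matrixSqrt A = CFC.sqrt A := by
  rw [matrixSqrt, dif_pos hA, ← hA.1.cfc_eq, CFC.sqrt_eq_real_sqrt A hA.nonneg, cfcₙ_eq_cfc]

theorem posSemidef_matrixSqrt {A : Matrix (Fin n) (Fin n) ℝ} (hA : A.PosSemidef) :
    (matrixSqrt A).PosSemidef := by
  rw [matrixSqrt_eq_sqrt hA]
  exact (CFC.sqrt_nonneg _).posSemidef

theorem transpose_matrixSqrt {A : Matrix (Fin n) (Fin n) ℝ} (hA : A.PosSemidef) :
    (matrixSqrt A)ᵀ = matrixSqrt A := by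
  simpa [IsHermitian, conjTranspose_eq_transpose_of_trivial] using (posSemidef_matrixSqrt hA).1

theorem matrixSqrt_mul_self {A : Matrix (Fin n) (Fin n) ℝ} (hA : A.PosSemidef) :
    matrixSqrt A * matrixSqrt A = A := by
  rw [matrixSqrt_eq_sqrt hA, CFC.sqrt_mul_sqrt_self _ hA.nonneg]

theorem posSemidef_transpose_mul_self (G : Matrix (Fin m) (Fin n) ℝ) : (Gᵀ * G).PosSemidef := by
  simpa [conjTranspose_eq_transpose_of_trivial] using posSemidef_conjTranspose_mul_self G

variable {G : Matrix (Fin m) (Fin n) ℝ}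

theorem isUnit_det_matrixSqrt (hG : IsUnit (Gᵀ * G)) : IsUnit (matrixSqrt (Gᵀ * G)).det := by
  have h := (isUnit_iff_isUnit_det _).mp hG
  rw [← matrixSqrt_mul_self (posSemidef_transpose_mul_self G), det_mul] at h
  exact isUnit_of_mul_isUnit_left h

theorem polarFactor_mul_matrixSqrt (hG : IsUnit (Gᵀ * G)) :
    polarFactor G * matrixSqrt (Gᵀ * G) = G := by
  rw [polarFactor, Matrix.mul_assoc, nonsing_inv_mul _ (isUnit_det_matrixSqrt hG), Matrix.mul_one]

theorem transpose_mul_polarFactor (hG : IsUnit (Gᵀ * G)) :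
    Gᵀ * polarFactor G = matrixSqrt (Gᵀ * G) := by
  calc Gᵀ * polarFactor G
      = matrixSqrt (Gᵀ * G) * matrixSqrt (Gᵀ * G) * (matrixSqrt (Gᵀ * G))⁻¹ := by
        rw [matrixSqrt_mul_self (posSemidef_transpose_mul_self G), polarFactor, Matrix.mul_assoc]
    _ = matrixSqrt (Gᵀ * G) := by
        rw [Matrix.mul_assoc, mul_nonsing_inv _ (isUnit_det_matrixSqrt hG), Matrix.mul_one]

theorem transpose_polarFactor_mul_polarFactor (hG : IsUnit (Gᵀ * G)) :
    (polarFactor G)ᵀ * polarFactor G = 1 := by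
  have hT : (polarFactor G)ᵀ = (matrixSqrt (Gᵀ * G))⁻¹ * Gᵀ := by
    rw [polarFactor, transpose_mul, transpose_nonsing_inv,
      transpose_matrixSqrt (posSemidef_transpose_mul_self G)]
  rw [hT, Matrix.mul_assoc, transpose_mul_polarFactor hG,
    nonsing_inv_mul _ (isUnit_det_matrixSqrt hG)]

theorem l2_opNorm_polarFactor_le_one (hG : IsUnit (Gᵀ * G)) : ‖polarFactor G‖ ≤ 1 :=
  l2_opNorm_le_one_of_conjTranspose_mul_self_eq_one <| by
    rw [conjTranspose_eq_transpose_of_trivial, transpose_polarFactor_mul_polarFactor hG]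

theorem abs_frobInner_le (hG : IsUnit (Gᵀ * G)) (W : Matrix (Fin m) (Fin n) ℝ) :
    |frobInner G W| ≤ ‖W‖ * (matrixSqrt (Gᵀ * G)).trace := by
  have hS := posSemidef_matrixSqrt (posSemidef_transpose_mul_self G)
  set O := polarFactor G
  set S := matrixSqrt (Gᵀ * G)
  have hGW : Gᵀ * W = S * (Oᵀ * W) := by
    conv_lhs => rw [← polarFactor_mul_matrixSqrt hG]
    rw [transpose_mul, transpose_matrixSqrt (posSemidef_transpose_mul_self G), Matrix.mul_assoc]
  have hOW : ‖Oᵀ * W‖ ≤ ‖W‖ :=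
    calc ‖Oᵀ * W‖ ≤ ‖Oᵀ‖ * ‖W‖ := l2_opNorm_mul _ _
      _ ≤ 1 * ‖W‖ := by
          gcongr
          rw [← conjTranspose_eq_transpose_of_trivial, l2_opNorm_conjTranspose]
          exact l2_opNorm_polarFactor_le_one hG
      _ = ‖W‖ := one_mul _
  rw [frobInner, hGW]
  exact (abs_trace_mul_le hS _).trans (mul_le_mul_of_nonneg_right hOW hS.trace_nonneg)

end PolarFactor

theorem stmt_0_general {m n : ℕ} (G : Matrix (Fin m) (Fin n) ℝ)
    (hG : IsUnit (Gᵀ * G)) (lam : ℝ) (hlam : 0 < lam) :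
    let η : ℝ := (1 / lam) * (matrixSqrt (Gᵀ * G)).trace
    let Wstar : Matrix (Fin m) (Fin n) ℝ := (-η) • polarFactor G
    ∀ W : Matrix (Fin m) (Fin n) ℝ,
      frobInner G Wstar + lam / 2 * matSpectralNorm Wstar ^ 2 ≤
        frobInner G W + lam / 2 * matSpectralNorm W ^ 2 := by
  intro η Wstar W
  set t := (matrixSqrt (Gᵀ * G)).trace
  have ht : 0 ≤ t := (posSemidef_matrixSqrt (posSemidef_transpose_mul_self G)).trace_nonneg
  have hη : 0 ≤ η := by positivity
  have hlamη : lam * η = t := by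
    simp only [η, t]
    field_simp
  have hWstar : frobInner G Wstar = -η * t := by
    rw [frobInner, Matrix.mul_smul, trace_smul, transpose_mul_polarFactor hG, smul_eq_mul]
  have hWstar_norm : matSpectralNorm Wstar ^ 2 ≤ η ^ 2 := by
    refine pow_le_pow_left₀ (norm_nonneg _) ?_ 2
    simp only [Wstar, norm_smul, norm_neg, Real.norm_of_nonneg hη]
    exact mul_le_of_le_one_right hη (l2_opNorm_polarFactor_le_one hG)
  have hW : -(matSpectralNorm W * t) ≤ frobInner G W := (abs_le.mp (abs_frobInner_le hG W)).1
  rw [← hlamη] at hWstar hW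
  -- both sides are compared with `-λη²/2`, the minimum of `x ↦ -λη x + λ/2 x²`
  nlinarith [mul_le_mul_of_nonneg_left hWstar_norm hlam.le,
    mul_nonneg hlam.le (sq_nonneg (matSpectralNorm W - η))]

/-- Steepest descent under the spectral norm is achieved by the negatively scaled
polar factor of the gradient: for `G ≠ 0` of full column rank and `λ > 0`, the matrix
`ΔW* = -η • polarFactor G` with `η = (1/λ) · tr((GᵀG)^{1/2})` globally minimizes
`ΔW ↦ ⟨G, ΔW⟩_F + (λ/2) ‖ΔW‖₂²`. -/
theorem stmt_0 {m n : ℕ} (hmn : n ≤ m) (G : Matrix (Fin m) (Fin n) ℝ)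
    (hG0 : G ≠ 0) (hG : IsUnit (Gᵀ * G)) (lam : ℝ) (hlam : 0 < lam) :
    let η : ℝ := (1 / lam) * (matrixSqrt (Gᵀ * G)).trace
    let Wstar : Matrix (Fin m) (Fin n) ℝ := (-η) • polarFactor G
    ∀ W : Matrix (Fin m) (Fin n) ℝ,
      frobInner G Wstar + lam / 2 * matSpectralNorm Wstar ^ 2 ≤
        frobInner G W + lam / 2 * matSpectralNorm W ^ 2 :=
  stmt_0_general G hG lam hlam
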